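/- arXiv:2105.07089 — 2 statements merged into one kernel-verified Lean document; each statement's English description precedes it below -/
import Mathlib

section
/- In Remark 2's counterexample: over GF(2), the system of equations giving receiver 1 the values {a₁⊕b₁ (from t₁), a₄⊕b₄ (from t₄), b₁⊕b₄, a₂⊕a₃, a₃ (direct at t₃)} does NOT determine a₁ and a₄ uniquely; i.e., there exist two distinct assignments of (a₁,a₂,a₃,a₄,b₁,b₂,b₃,b₄) ∈ GF(2)⁸ agreeing on all these observed values but differing in a₁. -/
-- Compare the zero assignment with a₁ = a₄ = b₁ = b₄ = 1, the other variables 0: this difference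
-- lies in the kernel of the observation map (each observation sees two of its ones, or none).
/-- Remark 2's counterexample: over `GF(2)`, the observations
`{a₁⊕b₁, a₄⊕b₄, b₁⊕b₄, a₂⊕a₃, a₃}` available at receiver 1 do NOT determine `a₁`
uniquely: there exist two assignments agreeing on all observed values but differing
in `a₁`. -/
theorem pan_scheme_not_decodable :
    ∃ a₁ a₂ a₃ a₄ b₁ b₂ b₃ b₄ a₁' a₂' a₃' a₄' b₁' b₂' b₃' b₄' : ZMod 2,
      a₁ + b₁ = a₁' + b₁' ∧ a₄ + b₄ = a₄' + b₄' ∧ b₁ + b₄ = b₁' + b₄' ∧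
      a₂ + a₃ = a₂' + a₃' ∧ a₃ = a₃' ∧ a₁ ≠ a₁' :=
  ⟨0, 0, 0, 0, 0, 0, 0, 0, 1, 0, 0, 1, 1, 0, 0, 1, by decide⟩
end

section
/- For a queue with strictly stationary arrival process {A_t} and departure (service) process {D_t} each taking values in ℕ, if E[A₀] < E[D₀] then the queue-length process Q_{t+1} = max(Q_t + A_t - D_t, 0) started from Q₀ = 0 satisfies: Q_t/t → 0 almost surely as t → ∞. -/
/-!
Write `x = A - D` and `S_n = x + x ∘ T + ⋯ + x ∘ T^[n-1]`. Unrolling the Lindley recursion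
gives `Q_t = S_t - S_k` for some `k ≤ t`. By Birkhoff's ergodic theorem `S_n = n c + o(n)` with
`c = E[A₀] - E[D₀] ≤ 0`, so `Q_t ≤ (t - k) c + o(t) ≤ o(t)`.

Birkhoff's theorem is derived from Hopf's maximal ergodic theorem `∫_{sup_n S_n > 0} g ≥ 0`:
if `∫ g < 0`, the invariant set where `S_n` is unbounded above is null by ergodicity, since
otherwise it would force `∫ g ≥ 0`. Applied to `g - d` and `d - g` this squeezes the Birkhoff
averages of `g` between any two rationals around `∫ g`.
-/

open MeasureTheory Filter Set Topology

theorem Measurable.partialSups {ι Ω α : Type*} [Preorder ι] [LocallyFiniteOrderBot ι]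
    [MeasurableSpace Ω] [MeasurableSpace α] [SemilatticeSup α] [MeasurableSup₂ α]
    {f : ι → Ω → α} (hf : ∀ i, Measurable (f i)) (i : ι) :
    Measurable (partialSups f i) := by
  rw [partialSups_apply]
  exact Finset.measurable_sup' _ fun j _ => hf j

theorem MeasureTheory.Integrable.partialSups {ι Ω β : Type*} [Preorder ι]
    [LocallyFiniteOrderBot ι] [MeasurableSpace Ω] {μ : Measure Ω} [NormedAddCommGroup β]
    [Lattice β] [HasSolidNorm β] [IsOrderedAddMonoid β] {f : ι → Ω → β}
    (hf : ∀ i, Integrable (f i) μ) (i : ι) :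
    Integrable (partialSups f i) μ := by
  rw [partialSups_apply]
  exact Finset.sup'_induction (p := (Integrable · μ)) _ _ (fun _ h₁ _ h₂ => h₁.sup h₂)
    fun j _ => hf j

theorem birkhoffAverage_eq_birkhoffSum_div {α 𝕜 : Type*} [Field 𝕜] (f : α → α) (g : α → 𝕜)
    (n : ℕ) (x : α) : birkhoffAverage 𝕜 f g n x = birkhoffSum f g n x / n := by
  rw [birkhoffAverage, smul_eq_mul, inv_mul_eq_div]

section BirkhoffSum

variable {Ω : Type*}

theorem partialSups_birkhoffSum_nonneg (T : Ω → Ω) (g : Ω → ℝ) (N : ℕ) (ω : Ω) :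
    0 ≤ partialSups (birkhoffSum T g) N ω :=
  le_partialSups_of_le (birkhoffSum T g) N.zero_le ω

theorem partialSups_birkhoffSum_le (T : Ω → Ω) (g : Ω → ℝ) (N : ℕ) (ω : Ω) :
    partialSups (birkhoffSum T g) N ω ≤
      max 0 (g ω + partialSups (birkhoffSum T g) N (T ω)) := by
  rw [Pi.partialSups_apply]
  refine partialSups_le _ _ _ fun n hn => ?_
  cases n with
  | zero => exact le_max_left _ _
  | succ m =>
    rw [birkhoffSum_succ']
    exact le_max_of_le_right (add_le_add_right
      (le_partialSups_of_le (birkhoffSum T g) (by omega : m ≤ N) (T ω)) _)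

theorem bddAbove_range_birkhoffSum_apply_iff (T : Ω → Ω) (g : Ω → ℝ) (ω : Ω) :
    BddAbove (range fun n => birkhoffSum T g n (T ω)) ↔
      BddAbove (range fun n => birkhoffSum T g n ω) := by
  simp only [bddAbove_def, forall_mem_range]
  constructor
  · rintro ⟨C, hC⟩
    refine ⟨max 0 (g ω + C), fun n => ?_⟩
    cases n with
    | zero => exact le_max_left _ _
    | succ n =>
      exact (birkhoffSum_succ' T g n ω).trans_le (le_max_of_le_right (by gcongr; exact hC n))
  · rintro ⟨C, hC⟩
    exact ⟨C - g ω, fun n => by linarith [birkhoffSum_succ' T g n ω, hC (n + 1)]⟩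

variable [MeasurableSpace Ω] {μ : Measure Ω} {T : Ω → Ω} {g : Ω → ℝ}

theorem Measurable.birkhoffSum (hg : Measurable g) (hT : Measurable T) (n : ℕ) :
    Measurable (birkhoffSum T g n) :=
  Finset.measurable_sum _ fun k _ => hg.comp (hT.iterate k)

theorem MeasureTheory.MeasurePreserving.integrable_birkhoffSum (hT : MeasurePreserving T μ μ)
    (hg : Integrable g μ) (n : ℕ) : Integrable (birkhoffSum T g n) μ :=
  integrable_finsetSum _ fun k _ => (hT.iterate k).integrable_comp_of_integrable hg

/-- Garsia's proof: on `{M_N > 0}` the running maximum satisfies `M_N ≤ g + M_N ∘ T`, and `M_N`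
vanishes off that set while `M_N ∘ T ≥ 0` has the same integral as `M_N`. -/
theorem MeasureTheory.MeasurePreserving.setIntegral_partialSups_birkhoffSum_pos_nonneg
    (hT : MeasurePreserving T μ μ) (hg : Measurable g) (hgi : Integrable g μ) (N : ℕ) :
    0 ≤ ∫ ω in {ω | 0 < partialSups (birkhoffSum T g) N ω}, g ω ∂μ := by
  set M := partialSups (birkhoffSum T g) N
  have hM_nonneg : ∀ ω, 0 ≤ M ω := partialSups_birkhoffSum_nonneg T g N
  have hMm : Measurable M := Measurable.partialSups (hg.birkhoffSum hT.measurable) N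
  have hMi : Integrable M μ := Integrable.partialSups (hT.integrable_birkhoffSum hgi) N
  have hMTi : Integrable (M ∘ T) μ := hT.integrable_comp_of_integrable hMi
  have hMT : ∫ ω, M (T ω) ∂μ = ∫ ω, M ω ∂μ := by
    conv_rhs => rw [← hT.map_eq]
    exact (integral_map hT.measurable.aemeasurable hMm.aestronglyMeasurable).symm
  calc 0 = ∫ ω, M ω ∂μ - ∫ ω, M (T ω) ∂μ := by rw [hMT, sub_self]
    _ ≤ ∫ ω in {ω | 0 < M ω}, M ω ∂μ - ∫ ω in {ω | 0 < M ω}, M (T ω) ∂μ := by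
      refine sub_le_sub (setIntegral_eq_integral_of_forall_compl_eq_zero fun ω hω =>
        le_antisymm (not_lt.1 hω) (hM_nonneg ω)).ge ?_
      exact setIntegral_le_integral hMTi (Eventually.of_forall fun ω => hM_nonneg (T ω))
    _ = ∫ ω in {ω | 0 < M ω}, (M ω - M (T ω)) ∂μ :=
      (integral_sub hMi.integrableOn hMTi.integrableOn).symm
    _ ≤ ∫ ω in {ω | 0 < M ω}, g ω ∂μ := by
      refine setIntegral_mono_on (hMi.sub hMTi).integrableOn hgi.integrableOn
        (measurableSet_lt measurable_const hMm) fun ω hω => ?_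
      rcases le_max_iff.1 (partialSups_birkhoffSum_le T g N ω) with h | h
      · exact absurd h (not_le.2 hω)
      · change M ω - M (T ω) ≤ g ω
        linarith

theorem MeasureTheory.MeasurePreserving.setIntegral_exists_birkhoffSum_pos_nonneg
    (hT : MeasurePreserving T μ μ) (hg : Measurable g) (hgi : Integrable g μ) :
    0 ≤ ∫ ω in {ω | ∃ n, 0 < birkhoffSum T g n ω}, g ω ∂μ := by
  have hunion : {ω | ∃ n, 0 < birkhoffSum T g n ω}
      = ⋃ N, {ω | 0 < partialSups (birkhoffSum T g) N ω} := by
    ext ω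
    simp only [mem_ofPred_eq, mem_iUnion, Pi.partialSups_apply, ← not_le, partialSups_le_iff]
    push Not
    exact ⟨fun ⟨n, hn⟩ => ⟨n, n, le_rfl, hn⟩, fun ⟨_, n, _, hn⟩ => ⟨n, hn⟩⟩
  rw [hunion]
  refine ge_of_tendsto (tendsto_setIntegral_of_monotone (fun N => ?_) (fun N N' hN ω hω => ?_)
    hgi.integrableOn)
    (Eventually.of_forall (hT.setIntegral_partialSups_birkhoffSum_pos_nonneg hg hgi))
  · exact measurableSet_lt measurable_const
      (Measurable.partialSups (hg.birkhoffSum hT.measurable) N)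
  · exact hω.out.trans_le (Pi.le_def.1 (partialSups_monotone _ hN) ω)

theorem Ergodic.ae_bddAbove_range_birkhoffSum (hT : Ergodic T μ) (hg : Measurable g)
    (hgi : Integrable g μ) (hneg : ∫ ω, g ω ∂μ < 0) :
    ∀ᵐ ω ∂μ, BddAbove (range fun n => birkhoffSum T g n ω) := by
  have hB : MeasurableSet {ω | BddAbove (range fun n => birkhoffSum T g n ω)} :=
    measurableSet_bddAbove_range (hg.birkhoffSum hT.measurable)
  refine (hT.ae_mem_or_ae_notMem hB (Set.ext fun ω =>
    bddAbove_range_birkhoffSum_apply_iff T g ω)).resolve_right fun hunb => hneg.not_ge ?_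
  have hpos : ∀ᵐ ω ∂μ, ω ∈ {ω | ∃ n, 0 < birkhoffSum T g n ω} := by
    filter_upwards [hunb] with ω hω
    obtain ⟨_, ⟨n, rfl⟩, hn⟩ := not_bddAbove_iff.1 hω 0
    exact ⟨n, hn⟩
  simpa [Measure.restrict_eq_self_of_ae_mem hpos] using
    hT.toMeasurePreserving.setIntegral_exists_birkhoffSum_pos_nonneg hg hgi

variable [IsProbabilityMeasure μ]

theorem Ergodic.ae_eventually_birkhoffAverage_lt (hT : Ergodic T μ) (hg : Measurable g)
    (hgi : Integrable g μ) {d : ℝ} (hd : ∫ ω, g ω ∂μ < d) :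
    ∀ᵐ ω ∂μ, ∀ᶠ n in atTop, birkhoffAverage ℝ T g n ω < d := by
  obtain ⟨d', hgd', hd'd⟩ := exists_between hd
  have hsub : ∀ n ω,
      birkhoffSum T (fun ω => g ω - d') n ω = birkhoffSum T g n ω - n * d' := by
    intro n ω
    simp [birkhoffSum, Finset.sum_sub_distrib]
  have hneg : ∫ ω, (g ω - d') ∂μ < 0 := by
    rw [integral_sub hgi (integrable_const d'), integral_const]
    simp only [probReal_univ, smul_eq_mul, one_mul]
    linarith
  filter_upwards [hT.ae_bddAbove_range_birkhoffSum (g := fun ω => g ω - d')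
    (hg.sub measurable_const) (hgi.sub (integrable_const d')) hneg] with ω ⟨C, hC⟩
  have hCn : ∀ n : ℕ, birkhoffSum T g n ω ≤ n * d' + C := fun n => by
    linarith [hsub n ω, hC (mem_range_self n)]
  filter_upwards [(tendsto_const_div_atTop_nhds_zero_nat C).eventually
    (gt_mem_nhds (show 0 < d - d' by linarith)), eventually_ge_atTop 1] with n hn hn1
  have hnpos : (0 : ℝ) < n := by exact_mod_cast hn1
  calc birkhoffAverage ℝ T g n ω = birkhoffSum T g n ω / n :=
        birkhoffAverage_eq_birkhoffSum_div T g n ω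
    _ ≤ (n * d' + C) / n := by gcongr; exact hCn n
    _ = d' + C / n := by field_simp
    _ < d := by linarith

theorem Ergodic.ae_eventually_lt_birkhoffAverage (hT : Ergodic T μ) (hg : Measurable g)
    (hgi : Integrable g μ) {d : ℝ} (hd : d < ∫ ω, g ω ∂μ) :
    ∀ᵐ ω ∂μ, ∀ᶠ n in atTop, d < birkhoffAverage ℝ T g n ω := by
  have hneg : ∫ ω, (-g) ω ∂μ < -d := by rw [Pi.neg_def, integral_neg]; linarith
  filter_upwards [hT.ae_eventually_birkhoffAverage_lt hg.neg hgi.neg hneg] with ω hω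
  filter_upwards [hω] with n hn
  simpa [birkhoffAverage_neg] using hn

theorem Ergodic.ae_tendsto_birkhoffAverage (hT : Ergodic T μ) (hg : Measurable g)
    (hgi : Integrable g μ) :
    ∀ᵐ ω ∂μ, Tendsto (birkhoffAverage ℝ T g · ω) atTop (𝓝 (∫ ω, g ω ∂μ)) := by
  have hupper : ∀ᵐ ω ∂μ, ∀ q : {q : ℚ // ∫ ω, g ω ∂μ < q},
      ∀ᶠ n in atTop, birkhoffAverage ℝ T g n ω < q :=
    ae_all_iff.2 fun q => hT.ae_eventually_birkhoffAverage_lt hg hgi q.2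
  have hlower : ∀ᵐ ω ∂μ, ∀ q : {q : ℚ // q < ∫ ω, g ω ∂μ},
      ∀ᶠ n in atTop, (q : ℝ) < birkhoffAverage ℝ T g n ω :=
    ae_all_iff.2 fun q => hT.ae_eventually_lt_birkhoffAverage hg hgi q.2
  filter_upwards [hupper, hlower] with ω hu hl
  refine tendsto_order.2 ⟨fun a ha => ?_, fun b hb => ?_⟩
  · obtain ⟨q, haq, hq⟩ := exists_rat_btwn ha
    exact (hl ⟨q, hq⟩).mono fun n hn => haq.trans hn
  · obtain ⟨q, hq, hqb⟩ := exists_rat_btwn hb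
    exact (hu ⟨q, hq⟩).mono fun n hn => hn.trans hqb

end BirkhoffSum

def lindley (a : ℕ → ℝ) : ℕ → ℝ
  | 0 => 0
  | t + 1 => max (lindley a t + a t) 0

section Lindley

variable (a : ℕ → ℝ)

theorem lindley_nonneg : ∀ t, 0 ≤ lindley a t
  | 0 => le_rfl
  | _ + 1 => le_max_right _ _

theorem exists_lindley_eq_sum_sub_sum (t : ℕ) :
    ∃ k ≤ t, lindley a t = ∑ i ∈ Finset.range t, a i - ∑ i ∈ Finset.range k, a i := by
  induction t with
  | zero => exact ⟨0, le_rfl, by simp [lindley]⟩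
  | succ t ih =>
    obtain ⟨k, hk, hq⟩ := ih
    rcases le_total 0 (lindley a t + a t) with h | h
    · refine ⟨k, hk.trans t.le_succ, ?_⟩
      rw [lindley, max_eq_left h, hq, Finset.sum_range_succ]
      ring
    · exact ⟨t + 1, le_rfl, by rw [lindley, max_eq_right h, sub_self]⟩

end Lindley

theorem exists_abs_sub_mul_le_of_tendsto_div {s : ℕ → ℝ} {c ε : ℝ}
    (hs : Tendsto (fun n => s n / n) atTop (𝓝 c)) (hε : 0 < ε) :
    ∃ C, ∀ n : ℕ, |s n - n * c| ≤ ε * n + C := by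
  have hev : ∀ᶠ n : ℕ in atTop, |s n - n * c| - ε * n ≤ 0 := by
    filter_upwards [Metric.tendsto_nhds.1 hs ε hε, eventually_ge_atTop 1] with n hn hn1
    have hnpos : (0 : ℝ) < n := by exact_mod_cast hn1
    have hsn : s n - n * c = n * (s n / n - c) := by field_simp
    rw [sub_nonpos, hsn, abs_mul, abs_of_pos hnpos, mul_comm]
    exact mul_le_mul_of_nonneg_right (Real.dist_eq _ _ ▸ hn).le hnpos.le
  obtain ⟨C, hC⟩ := (isBoundedUnder_of_eventually_le hev).bddAbove_range
  exact ⟨C, fun n => by linarith [hC (mem_range_self n)]⟩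

theorem tendsto_lindley_div_atTop_zero {a : ℕ → ℝ} {c : ℝ}
    (ha : Tendsto (fun n => (∑ i ∈ Finset.range n, a i) / n) atTop (𝓝 c)) (hc : c ≤ 0) :
    Tendsto (fun t => lindley a t / t) atTop (𝓝 0) := by
  refine tendsto_order.2 ⟨fun b hb => Eventually.of_forall fun t =>
    hb.trans_le (div_nonneg (lindley_nonneg a t) t.cast_nonneg), fun b hb => ?_⟩
  obtain ⟨C, hC⟩ := exists_abs_sub_mul_le_of_tendsto_div ha (show 0 < b / 4 by positivity)
  have hlin : ∀ t : ℕ, lindley a t ≤ b / 2 * t + 2 * C := fun t => by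
    obtain ⟨k, hk, hq⟩ := exists_lindley_eq_sum_sub_sum a t
    have hkt : (k : ℝ) ≤ t := by exact_mod_cast hk
    have hdrift : (t - k : ℝ) * c ≤ 0 := mul_nonpos_of_nonneg_of_nonpos (sub_nonneg.2 hkt) hc
    have hkb : b / 4 * k ≤ b / 4 * t := by gcongr
    linarith [(abs_le.1 (hC t)).2, (abs_le.1 (hC k)).1]
  filter_upwards [(tendsto_const_div_atTop_nhds_zero_nat (2 * C)).eventually
    (gt_mem_nhds (show 0 < b / 2 by positivity)), eventually_ge_atTop 1] with t ht ht1
  have htpos : (0 : ℝ) < t := by exact_mod_cast ht1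
  calc lindley a t / t ≤ (b / 2 * t + 2 * C) / t := by gcongr; exact hlin t
    _ = b / 2 + 2 * C / t := by field_simp
    _ < b := by linarith

/-- Weak form of Loynes' theorem: for a jointly stationary ergodic arrival/departure
process (modeled by an ergodic shift `T` with `A_t = A ∘ T^[t]`, `D_t = D ∘ T^[t]`),
if `E[A₀] < E[D₀]` then the Lindley queue `Q_{t+1} = max(Q_t + A_t - D_t, 0)` started
from `Q₀ = 0` satisfies `Q_t / t → 0` almost surely. -/
theorem loynes_sublinear {Ω : Type*} [MeasurableSpace Ω]
    (μ : Measure Ω) [IsProbabilityMeasure μ]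
    (T : Ω → Ω) (hT : Ergodic T μ)
    (A D : Ω → ℕ) (hA : Measurable A) (hD : Measurable D)
    (hAint : Integrable (fun ω => (A ω : ℝ)) μ)
    (hDint : Integrable (fun ω => (D ω : ℝ)) μ)
    (hmean : ∫ ω, (A ω : ℝ) ∂μ < ∫ ω, (D ω : ℝ) ∂μ)
    (Q : ℕ → Ω → ℝ)
    (hQ0 : ∀ ω, Q 0 ω = 0)
    (hQrec : ∀ t ω, Q (t + 1) ω
      = max (Q t ω + (A (T^[t] ω) : ℝ) - (D (T^[t] ω) : ℝ)) 0) :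
    ∀ᵐ ω ∂μ, Tendsto (fun t : ℕ => Q t ω / t) atTop (nhds 0) := by
  set x : Ω → ℝ := fun ω => (A ω : ℝ) - D ω
  have hx : Measurable x := by fun_prop
  have hdrift : ∫ ω, x ω ∂μ ≤ 0 := by
    rw [integral_sub hAint hDint]
    exact (sub_neg.2 hmean).le
  have hQ : ∀ ω t, Q t ω = lindley (fun t => x (T^[t] ω)) t := fun ω t => by
    induction t with
    | zero => exact hQ0 ω
    | succ t ih => rw [hQrec, lindley, ← ih, add_sub_assoc]
  filter_upwards [hT.ae_tendsto_birkhoffAverage hx (hAint.sub hDint)] with ω hω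
  simp only [hQ ω]
  exact tendsto_lindley_div_atTop_zero
    (by simpa only [birkhoffAverage_eq_birkhoffSum_div, birkhoffSum] using hω) hdrift
end
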